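/- arXiv:0803.4392 — 4 statements merged into one kernel-verified Lean document; each statement's English description precedes it below -/
import Mathlib

section
/- Let l ≥ 1 and let n, m be divisors of l with n dividing m. If I = I_l(n,t) and J = I_l(m,s) are Riemann sets with I ∩ J ≠ ∅, then I ⊆ J. -/
open MeasureTheory Filter Set

/-- The circle `𝕋 = ℝ/ℤ` with its Lebesgue (Haar) probability measure. -/
abbrev Circle1 := AddCircle (1 : ℝ)

/-- The Riemann set `I_l(n,t) = ⋃_{i=0}^{n-1} [t/l + i/n, (t+1)/l + i/n) ⊆ 𝕋`. -/
def RiemannSet (l n t : ℕ) : Set Circle1 :=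
  ⋃ i ∈ Finset.range n,
    (fun r : ℝ => (r : Circle1)) ''
      Set.Ico ((t : ℝ) / l + (i : ℝ) / n) (((t : ℝ) + 1) / l + (i : ℝ) / n)

/-!
The intervals making up `I_l(n,t)` are the cells `[k/l, (k+1)/l)` with `k = t + i·(l/n)`,
`0 ≤ i < n`; modulo `1` these are exactly the cells with `k ≡ t [mod l/n]`, because `l/n ∣ l`.
So `↑r ∈ I_l(n,t)` iff `⌊r·l⌋ ≡ t [ZMOD l/n]`. Since `n ∣ m`, `l/m` divides `l/n`: a common
point of `I_l(n,t)` and `I_l(m,s)` gives `t ≡ s [ZMOD l/m]`, and then every point of `I_l(n,t)`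
satisfies the congruence describing `I_l(m,s)`.
-/

lemma mem_Ico_div_iff_floor_mul_eq {K : Type*} [Field K] [LinearOrder K] [IsStrictOrderedRing K]
    [FloorRing K] {l : K} (hl : 0 < l) (r : K) (k : ℤ) :
    r ∈ Ico (k / l) ((k + 1) / l) ↔ ⌊r * l⌋ = k := by
  rw [Int.floor_eq_iff, mem_Ico, div_le_iff₀ hl, lt_div_iff₀ hl]

lemma AddCircle.coe_mem_image_coe_iff {p : ℝ} (r : ℝ) (S : Set ℝ) :
    (r : AddCircle p) ∈ ((↑) : ℝ → AddCircle p) '' S ↔ ∃ z : ℤ, r + z • p ∈ S := by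
  constructor
  · rintro ⟨r', hr', hrr'⟩
    obtain ⟨z, hz⟩ := AddSubgroup.mem_zmultiples_iff.mp (QuotientAddGroup.eq.mp hrr'.symm)
    exact ⟨z, by rwa [hz, add_neg_cancel_left]⟩
  · rintro ⟨z, hz⟩
    exact ⟨_, hz, by simp⟩

lemma Int.modEq_iff_exists_lt_add_mul_eq {u n : ℕ} (hn : 0 < n) (k t : ℤ) :
    k ≡ t [ZMOD u] ↔ ∃ i < n, ∃ z : ℤ, k + z * (n * u) = t + i * u := by
  constructor
  · intro h
    obtain ⟨c, hc⟩ := Int.modEq_iff_dvd.mp h.symm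
    have hc_div := Int.emod_add_mul_ediv c n
    have hc_mod_nonneg : 0 ≤ c % n := Int.emod_nonneg c (by omega)
    have hc_mod_lt : c % n < n := Int.emod_lt_of_pos c (by omega)
    refine ⟨(c % n).toNat, by omega, -(c / n), ?_⟩
    rw [Int.toNat_of_nonneg hc_mod_nonneg]
    linear_combination hc - u * hc_div
  · rintro ⟨i, -, z, hz⟩
    exact Int.modEq_iff_dvd.mpr ⟨z * n - i, by linear_combination -hz⟩

lemma coe_mem_riemannSet_iff {l n : ℕ} (hl : 0 < l) (hn : n ∣ l) (t : ℕ) (r : ℝ) :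
    (r : Circle1) ∈ RiemannSet l n t ↔ ⌊r * l⌋ ≡ t [ZMOD (l / n : ℕ)] := by
  obtain ⟨u, rfl⟩ := hn
  have hn0 : 0 < n := Nat.pos_of_mul_pos_right hl
  have hl' : (0 : ℝ) < (n * u : ℕ) := by exact_mod_cast hl
  have endpoint (c : ℝ) (i : ℕ) :
      c / (n * u : ℕ) + (i : ℝ) / n = (c + i * u) / (n * u : ℕ) := by
    have : (n : ℝ) ≠ 0 := by positivity
    field_simp
    push_cast
    ring
  have floor_shift (z : ℤ) :
      ⌊(r + z • (1 : ℝ)) * (n * u : ℕ)⌋ = ⌊r * (n * u : ℕ)⌋ + z * (n * u) := by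
    rw [← Int.floor_add_intCast]
    push_cast
    ring_nf
  rw [Nat.mul_div_cancel_left u hn0, Int.modEq_iff_exists_lt_add_mul_eq hn0]
  simp only [RiemannSet, mem_iUnion, Finset.mem_range, exists_prop, endpoint,
    add_right_comm _ (1 : ℝ), AddCircle.coe_mem_image_coe_iff]
  refine exists_congr fun i ↦ and_congr_right fun _ ↦ exists_congr fun z ↦ ?_
  rw [← floor_shift]
  simpa using mem_Ico_div_iff_floor_mul_eq hl' (r + z • 1) (t + i * u)

theorem riemannSet_subset_of_inter_nonempty_general
    (l n m t s : ℕ) (hl : 1 ≤ l) (hn : n ∣ l) (hm : m ∣ l) (hnm : n ∣ m)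
    (hne : (RiemannSet l n t ∩ RiemannSet l m s).Nonempty) :
    RiemannSet l n t ⊆ RiemannSet l m s := by
  have hdvd : ((l / m : ℕ) : ℤ) ∣ (l / n : ℕ) :=
    Int.natCast_dvd_natCast.mpr (Nat.div_dvd_div_left hm hnm)
  obtain ⟨x, hxn, hxm⟩ := hne
  obtain ⟨r, rfl⟩ := QuotientAddGroup.mk_surjective x
  rintro y hy
  obtain ⟨r', rfl⟩ := QuotientAddGroup.mk_surjective y
  rw [coe_mem_riemannSet_iff hl hn] at hxn hy
  rw [coe_mem_riemannSet_iff hl hm] at hxm ⊢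
  exact (hy.of_dvd hdvd).trans ((hxn.of_dvd hdvd).symm.trans hxm)

/-- If `n ∣ m`, both dividing `l`, and the Riemann sets `I_l(n,t)`, `I_l(m,s)` intersect,
then `I_l(n,t) ⊆ I_l(m,s)`. -/
theorem riemannSet_subset_of_inter_nonempty
    (l n m t s : ℕ) (hl : 1 ≤ l) (hn : n ∣ l) (hm : m ∣ l) (hnm : n ∣ m)
    (ht : t < l / n) (hs : s < l / m)
    (hne : (RiemannSet l n t ∩ RiemannSet l m s).Nonempty) :
    RiemannSet l n t ⊆ RiemannSet l m s :=
  riemannSet_subset_of_inter_nonempty_general l n m t s hl hn hm hnm hne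
end

section
/- Let p_1 < p_2 < ⋯ < p_d be the first d primes, l = p_1^{l_1}⋯p_d^{l_d}, and m = p_1^{m_1}⋯p_d^{m_d} with 0 ≤ m_k ≤ l_k. Fix an integer t ≥ 0, let t_k = t mod p_k^{m_k}, and let t̄_k denote the p_k-reverse of t_k computed with m_k base-p_k digits. For u = 0,1,…,l/m − 1 set s_k(u) = (mu + t) mod p_k^{l_k} and let s̄_k(u) be the p_k-reverse of s_k(u) computed with l_k base-p_k digits. Then B_m(t̄_1,…,t̄_d) = ⋃_{u=0}^{l/m − 1} B_l(s̄_1(u),…,s̄_d(u)), and the rectangles in this union are pairwise disjoint. -/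
open MeasureTheory Set

/-- The infinite torus `𝕋^∞ = ∏_{k=1}^∞ 𝕋`. -/
abbrev Tinf := ℕ → Circle1

/-- `nthPrime k` is the `(k+1)`-st prime: `nthPrime 0 = 2 = p_1`, `nthPrime 1 = 3 = p_2`, … -/
noncomputable def nthPrime (k : ℕ) : ℕ := Nat.nth Nat.Prime k

/-- The arc `[a, b) ⊆ 𝕋`, image of the real interval `[a,b)` on the circle. -/
def circleIco (a b : ℝ) : Set Circle1 := (fun r : ℝ => (r : Circle1)) '' Set.Ico a b

/-- The rectangle `B_l(j_1,…,j_d) = {x ∈ 𝕋^∞ : j_k/p_k^{L_k} ≤ x_k < (j_k+1)/p_k^{L_k}}`,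
where `l = p_1^{L_1} ⋯ p_d^{L_d}`. -/
def Rect (d : ℕ) (L j : Fin d → ℕ) : Set Tinf :=
  {x | ∀ k : Fin d,
    x k.val ∈ circleIco ((j k : ℝ) / ((nthPrime k.val ^ L k : ℕ) : ℝ))
      (((j k : ℝ) + 1) / ((nthPrime k.val ^ L k : ℕ) : ℝ))}

/-- The `p`-reverse of `a` computed with `j` base-`p` digits: the digit of `a` at `p^i`
becomes the digit at `p^(j-1-i)`. -/
def pReverse (p j a : ℕ) : ℕ :=
  ∑ i ∈ Finset.range j, (a / p ^ i % p) * p ^ (j - 1 - i)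

/-!
Write `R_k = p_k^(L_k - M_k)`. Reversing `L_k` digits and then discarding the lowest
`L_k - M_k` digits reverses the lowest `M_k` digits, which only see the argument modulo
`p_k^M_k`; since `p_k^M_k ∣ m`, this gives `s̄_k(u) / R_k = t̄_k`, i.e. `B_l(s̄(u)) ⊆ B_m(t̄)`.
Digit reversal determines its argument modulo `p_k^L_k`, so `s̄(u) = s̄(v)` gives `mu ≡ mv`
modulo every `p_k^L_k`, hence modulo `l` by the Chinese remainder theorem, and `u = v` for
`u, v < l/m`. So the `l/m = ∏ R_k` rectangles are distinct, and as `B_m(t̄)` contains only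
`∏ R_k` rectangles of level `l`, they fill it.
-/

open scoped Function

lemma pReverse_succ (p j a : ℕ) :
    pReverse p (j + 1) a = p * pReverse p j a + a / p ^ j % p := by
  rw [pReverse, Finset.sum_range_succ, pReverse, Finset.mul_sum, Nat.add_sub_cancel, Nat.sub_self,
    pow_zero, mul_one]
  congr 1
  refine Finset.sum_congr rfl fun i hi => ?_
  rw [show j - i = j - 1 - i + 1 by have := Finset.mem_range.mp hi; omega, pow_succ]
  ring

lemma pReverse_succ' (p j a : ℕ) :
    pReverse p (j + 1) a = a % p * p ^ j + pReverse p j (a / p) := by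
  rw [pReverse, Finset.sum_range_succ', add_comm, pReverse]
  congr 1
  · simp
  · refine Finset.sum_congr rfl fun i _ => ?_
    rw [Nat.div_div_eq_div_mul, ← pow_succ', show j + 1 - 1 - (i + 1) = j - 1 - i by omega]

lemma pReverse_lt {p : ℕ} (hp : 0 < p) (j a : ℕ) : pReverse p j a < p ^ j := by
  induction j with
  | zero => simp [pReverse]
  | succ j ih =>
    calc pReverse p (j + 1) a = p * pReverse p j a + a / p ^ j % p := pReverse_succ p j a
      _ < p * (pReverse p j a + 1) := by
        rw [mul_add_one]; exact Nat.add_lt_add_left (Nat.mod_lt _ hp) _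
      _ ≤ p ^ (j + 1) := by rw [pow_succ']; exact Nat.mul_le_mul_left _ ih

lemma pReverse_div_pow_sub {p : ℕ} (hp : 0 < p) {M L : ℕ} (h : M ≤ L) (a : ℕ) :
    pReverse p L a / p ^ (L - M) = pReverse p M a := by
  induction L, h using Nat.le_induction with
  | base => simp
  | succ L hML ih =>
    rw [pReverse_succ, Nat.sub_add_comm hML, pow_succ', ← Nat.div_div_eq_div_mul,
      Nat.mul_add_div hp, Nat.div_eq_of_lt (Nat.mod_lt _ hp), add_zero, ih]

lemma pReverse_pReverse {p : ℕ} (hp : 0 < p) (j a : ℕ) :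
    pReverse p j (pReverse p j a) = a % p ^ j := by
  induction j generalizing a with
  | zero => simp [pReverse, Nat.mod_one]
  | succ j ih =>
    have hdigit : a / p ^ j % p < p := Nat.mod_lt _ hp
    rw [pReverse_succ p j a, pReverse_succ', Nat.mul_add_mod, Nat.mod_eq_of_lt hdigit,
      Nat.mul_add_div hp, Nat.div_eq_of_lt hdigit, add_zero, ih, Nat.mod_pow_succ]
    ring

lemma mod_pow_div_pow_mod {p i j : ℕ} (hij : i < j) (a : ℕ) :
    a % p ^ j / p ^ i % p = a / p ^ i % p := by
  rw [← Nat.add_sub_cancel' hij.le, pow_add, Nat.mod_mul_right_div_self,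
    Nat.mod_mod_of_dvd _ (dvd_pow_self p (by omega))]

lemma pReverse_eq_pReverse_iff {p : ℕ} (hp : 0 < p) {j a b : ℕ} :
    pReverse p j a = pReverse p j b ↔ a ≡ b [MOD p ^ j] := by
  refine ⟨fun h => ?_, fun h => Finset.sum_congr rfl fun i hi => ?_⟩
  · rw [Nat.ModEq, ← pReverse_pReverse hp, h, pReverse_pReverse hp]
  · have hij := Finset.mem_range.mp hi
    rw [← mod_pow_div_pow_mod hij, h, mod_pow_div_pow_mod hij]

lemma pReverse_mul_add_mod_div {p : ℕ} (hp : 0 < p) {M L : ℕ} (h : M ≤ L) {m : ℕ}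
    (hm : p ^ M ∣ m) (u t : ℕ) :
    pReverse p L ((m * u + t) % p ^ L) / p ^ (L - M) = pReverse p M (t % p ^ M) := by
  have hmt : m * u + t ≡ t [MOD p ^ M] := by
    simpa using ((Nat.modEq_zero_iff_dvd.mpr hm).mul_right u).add_right t
  rw [pReverse_div_pow_sub hp h, pReverse_eq_pReverse_iff hp]
  exact ((Nat.mod_modEq _ _).of_dvd (pow_dvd_pow _ h)).trans (hmt.trans (Nat.mod_modEq _ _).symm)

lemma prod_pow_div_prod_pow {ι : Type*} [Fintype ι] {p L M : ι → ℕ} (hp : ∀ i, 0 < p i)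
    (h : ∀ i, M i ≤ L i) :
    (∏ i, p i ^ L i) / ∏ i, p i ^ M i = ∏ i, p i ^ (L i - M i) := by
  rw [Finset.prod_congr rfl fun i _ => (pow_mul_pow_sub (p i) (h i)).symm, Finset.prod_mul_distrib,
    Nat.mul_div_cancel_left _ (Finset.prod_pos fun i _ => pow_pos (hp i) _)]

lemma modEq_prod_of_pairwise_coprime {ι : Type*} [Fintype ι] {n : ι → ℕ}
    (hn : Pairwise (Nat.Coprime on n)) {a b : ℕ} (h : ∀ i, a ≡ b [MOD n i]) :
    a ≡ b [MOD ∏ i, n i] := by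
  rw [Nat.modEq_iff_dvd, Nat.cast_prod]
  exact Fintype.prod_dvd_of_coprime (fun i j hij => Nat.isCoprime_iff_coprime.mpr (hn hij))
    fun i => Nat.modEq_iff_dvd.mp (h i)

lemma pairwise_coprime_nthPrime_pow {d : ℕ} (L : Fin d → ℕ) :
    Pairwise (Nat.Coprime on fun k : Fin d => nthPrime k.val ^ L k) := fun _ _ hne =>
  Nat.coprime_pow_primes _ _ (Nat.prime_nth_prime _) (Nat.prime_nth_prime _)
    fun h => hne (Fin.ext (Nat.nth_injective Nat.infinite_setOfPred_prime h))

lemma injOn_pReverse_mul_add {d : ℕ} (L : Fin d → ℕ) {m : ℕ} (hm : m ≠ 0)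
    (hml : m ∣ ∏ k, nthPrime k.val ^ L k) (t : ℕ) :
    Set.InjOn (fun u k => pReverse (nthPrime k.val) (L k) ((m * u + t) % nthPrime k.val ^ L k))
      (Set.Iio ((∏ k, nthPrime k.val ^ L k) / m)) := by
  intro u hu v hv huv
  have hmod : ∀ k : Fin d, m * u + t ≡ m * v + t [MOD nthPrime k.val ^ L k] := fun k =>
    ((Nat.mod_modEq _ _).symm.trans
      ((pReverse_eq_pReverse_iff (Nat.prime_nth_prime _).pos).mp (congrFun huv k))).trans
      (Nat.mod_modEq _ _)
  have hprod :=
    (modEq_prod_of_pairwise_coprime (pairwise_coprime_nthPrime_pow L) hmod).add_right_cancel' t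
  rw [← Nat.mul_div_cancel' hml] at hprod
  exact (Nat.ModEq.mul_left_cancel' hm hprod).eq_of_lt_of_lt hu hv

/-- `f` takes `∏ R i` distinct values, while there are only `∏ R i` tuples with prescribed
quotients `c`: those are told apart by their remainders. -/
lemma exists_apply_eq_of_injOn_of_div_eq {ι : Type*} [Fintype ι] [DecidableEq ι] {R c : ι → ℕ}
    (hR : ∀ i, 0 < R i) {f : ℕ → ι → ℕ} (hf : Set.InjOn f (Set.Iio (∏ i, R i)))
    (hfc : ∀ u i, f u i / R i = c i) {s : ι → ℕ} (hs : ∀ i, s i / R i = c i) :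
    ∃ u < ∏ i, R i, f u = s := by
  have hext : ∀ {a b : ι → ℕ}, (∀ i, a i / R i = b i / R i) →
      (fun i => a i % R i) = (fun i => b i % R i) → a = b := fun hdiv hmod =>
    funext fun i => Nat.ext_div_modEq (hdiv i) (congrFun hmod i)
  have hsurj : Set.SurjOn (fun u i => f u i % R i) (Finset.range (∏ i, R i))
      (Fintype.piFinset fun i => Finset.range (R i)) := by
    refine Finset.surjOn_of_injOn_of_card_le _ (fun u _ => ?_) (fun u hu v hv huv => ?_) ?_
    · simpa using fun i => Nat.mod_lt _ (hR i)
    · exact hf (by simpa using hu) (by simpa using hv) (hext (fun i => by rw [hfc, hfc]) huv)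
    · simp
  obtain ⟨u, hu, hfu⟩ := hsurj (by simpa using fun i => Nat.mod_lt (s i) (hR i))
  exact ⟨u, by simpa using hu, hext (fun i => by rw [hfc, hs]) hfu⟩

noncomputable def circleRep (x : Circle1) : ℝ := AddCircle.equivIco 1 0 x

lemma circleRep_mem_Ico (x : Circle1) : circleRep x ∈ Set.Ico (0 : ℝ) 1 := by
  simpa [circleRep] using (AddCircle.equivIco (1 : ℝ) 0 x).2

lemma mem_circleIco_iff {a b : ℝ} (ha : 0 ≤ a) (hb : b ≤ 1) {x : Circle1} :
    x ∈ circleIco a b ↔ circleRep x ∈ Set.Ico a b := by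
  constructor
  · rintro ⟨r, hr, rfl⟩
    rwa [circleRep, AddCircle.equivIco_coe_of_mem ⟨ha.trans hr.1, by linarith [hr.2]⟩]
  · exact fun hx => ⟨circleRep x, hx, AddCircle.coe_equivIco⟩

noncomputable def cellIndex (n : ℕ) (x : Circle1) : ℕ := ⌊circleRep x * n⌋₊

lemma cellIndex_eq_div (n : ℕ) {q : ℕ} (hq : q ≠ 0) (x : Circle1) :
    cellIndex n x = cellIndex (n * q) x / q := by
  rw [cellIndex, cellIndex, ← Nat.floor_div_natCast, Nat.cast_mul, ← mul_assoc,
    mul_div_cancel_right₀ _ (Nat.cast_ne_zero.mpr hq)]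

lemma mem_circleIco_iff_cellIndex {n j : ℕ} (hj : j < n) {x : Circle1} :
    x ∈ circleIco (j / n) ((j + 1) / n) ↔ cellIndex n x = j := by
  have hn : (0 : ℝ) < n := by exact_mod_cast (Nat.zero_le j).trans_lt hj
  have hjn : (j : ℝ) + 1 ≤ n := by exact_mod_cast hj
  have hx := circleRep_mem_Ico x
  rw [mem_circleIco_iff (by positivity) ((div_le_one hn).mpr hjn), cellIndex,
    Nat.floor_eq_iff (mul_nonneg hx.1 hn.le), Set.mem_Ico, div_le_iff₀ hn, lt_div_iff₀ hn]

lemma mem_rect_iff {d : ℕ} {e j : Fin d → ℕ} (hj : ∀ k, j k < nthPrime k.val ^ e k) (x : Tinf) :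
    x ∈ Rect d e j ↔ ∀ k, cellIndex (nthPrime k.val ^ e k) (x k.val) = j k :=
  forall_congr' fun k => mem_circleIco_iff_cellIndex (hj k)

lemma mem_rect_iff_cellIndex_div {d : ℕ} {L M j : Fin d → ℕ} (h : ∀ k, M k ≤ L k)
    (hj : ∀ k, j k < nthPrime k.val ^ M k) (x : Tinf) :
    x ∈ Rect d M j ↔
      ∀ k, cellIndex (nthPrime k.val ^ L k) (x k.val) / nthPrime k.val ^ (L k - M k) = j k := by
  refine (mem_rect_iff hj x).trans (forall_congr' fun k => ?_)
  have hp : 0 < nthPrime k.val := (Nat.prime_nth_prime k.val).pos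
  rw [cellIndex_eq_div _ (pow_pos hp (L k - M k)).ne', pow_mul_pow_sub _ (h k)]

theorem rect_eq_disjiUnion_rects_general
    (d : ℕ) (L M : Fin d → ℕ) (hML : ∀ k, M k ≤ L k) (t : ℕ)
    (l m : ℕ) (hl : l = ∏ k, nthPrime k.val ^ L k) (hm : m = ∏ k, nthPrime k.val ^ M k)
    (tbar : Fin d → ℕ) (sbar : ℕ → Fin d → ℕ)
    (htbar : ∀ k, tbar k = pReverse (nthPrime k.val) (M k) (t % nthPrime k.val ^ M k))
    (hsbar : ∀ u k, sbar u k =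
      pReverse (nthPrime k.val) (L k) ((m * u + t) % nthPrime k.val ^ L k)) :
    Rect d M tbar = (⋃ u ∈ Finset.range (l / m), Rect d L (sbar u)) ∧
      ∀ u ∈ Finset.range (l / m), ∀ v ∈ Finset.range (l / m), u ≠ v →
        Disjoint (Rect d L (sbar u)) (Rect d L (sbar v)) := by
  have hp : ∀ k : Fin d, 0 < nthPrime k.val := fun k => (Nat.prime_nth_prime k.val).pos
  have hlm : l / m = ∏ k, nthPrime k.val ^ (L k - M k) := hl ▸ hm ▸ prod_pow_div_prod_pow hp hML
  have hsdiv : ∀ u k, sbar u k / nthPrime k.val ^ (L k - M k) = tbar k := fun u k => by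
    rw [hsbar, htbar, pReverse_mul_add_mod_div (hp k) (hML k)
      (hm ▸ Finset.dvd_prod_of_mem _ (Finset.mem_univ k))]
  have hinj : Set.InjOn sbar (Set.Iio (l / m)) := by
    have hm0 : m ≠ 0 := hm ▸ Finset.prod_ne_zero_iff.mpr fun k _ => (pow_pos (hp k) _).ne'
    rw [funext fun u => funext (hsbar u), hl]
    exact injOn_pReverse_mul_add L hm0
      (hm ▸ Finset.prod_dvd_prod_of_dvd _ _ fun k _ => pow_dvd_pow _ (hML k)) t
  have hmemL : ∀ u x, x ∈ Rect d L (sbar u) ↔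
      ∀ k, cellIndex (nthPrime k.val ^ L k) (x k.val) = sbar u k :=
    fun u => mem_rect_iff fun k => hsbar u k ▸ pReverse_lt (hp k) _ _
  have hmemM := mem_rect_iff_cellIndex_div hML fun k => htbar k ▸ pReverse_lt (hp k) _ _
  refine ⟨Set.ext fun x => ?_, fun u hu v hv huv => Set.disjoint_left.mpr fun x hxu hxv => ?_⟩
  · simp only [Set.mem_iUnion, Finset.mem_range, exists_prop, hmemL, hmemM, hlm]
    refine ⟨fun hx => ?_, fun ⟨u, _, hu⟩ k => by rw [hu, hsdiv]⟩
    obtain ⟨u, hu, hsu⟩ := exists_apply_eq_of_injOn_of_div_eq (fun k => pow_pos (hp k) _)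
      (hlm ▸ hinj) hsdiv hx
    exact ⟨u, hu, fun k => (congrFun hsu k).symm⟩
  · refine huv (hinj (Finset.mem_range.mp hu) (Finset.mem_range.mp hv) (funext fun k => ?_))
    rw [← (hmemL u x).mp hxu k, (hmemL v x).mp hxv k]

/-- **Decomposition of a rectangle into smaller rectangles via digit reversal.**
With `l = ∏ p_k^{L_k}`, `m = ∏ p_k^{M_k}` (`M_k ≤ L_k`), `t̄_k` the `p_k`-reverse of
`t mod p_k^{M_k}` with `M_k` digits, and `s̄_k(u)` the `p_k`-reverse of
`(mu + t) mod p_k^{L_k}` with `L_k` digits, one has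
`B_m(t̄_1,…,t̄_d) = ⋃_{u=0}^{l/m - 1} B_l(s̄_1(u),…,s̄_d(u))`, a pairwise disjoint union. -/
theorem rect_eq_disjiUnion_rects
    (d : ℕ) (hd : 1 ≤ d) (L M : Fin d → ℕ) (hML : ∀ k, M k ≤ L k) (t : ℕ)
    (l m : ℕ) (hl : l = ∏ k, nthPrime k.val ^ L k) (hm : m = ∏ k, nthPrime k.val ^ M k)
    (tbar : Fin d → ℕ) (sbar : ℕ → Fin d → ℕ)
    (htbar : ∀ k, tbar k = pReverse (nthPrime k.val) (M k) (t % nthPrime k.val ^ M k))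
    (hsbar : ∀ u k, sbar u k =
      pReverse (nthPrime k.val) (L k) ((m * u + t) % nthPrime k.val ^ L k)) :
    Rect d M tbar = (⋃ u ∈ Finset.range (l / m), Rect d L (sbar u)) ∧
      ∀ u ∈ Finset.range (l / m), ∀ v ∈ Finset.range (l / m), u ≠ v →
        Disjoint (Rect d L (sbar u)) (Rect d L (sbar v)) :=
  rect_eq_disjiUnion_rects_general d L M hML t l m hl hm tbar sbar htbar hsbar
end

section
/- Let (X, μ) be a probability space and let A, A_1, A_2, …, A_n be independent measurable sets with ∑_{k=1}^n μ(A_k) ≤ 1/2. Set E = A ∩ (⋃_{k=1}^n A_k). Then there is an absolute constant C > 0 such that ∫_E Ψ( (1/3)(1 + ∑_{k=1}^n 𝟙_{A_k}(x)) ) dμ(x) ≤ C·μ(E). -/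
/-!
Let `N x` be the number of sets `Aₖ` containing `x`; then `N ≥ 1` on `E` and the integrand is
`Ψ((N + 1)/3)`. As `Ψ(x) ≤ x α(x) ≤ max(1, x)ᵏ` for `x ≤ k`, comparison with `xⁿ/n! ≤ eˣ` gives
`Ψ((k + 1)/3) ≤ 3 k!`. A union bound over the `k`-element sets of indices, independence and
`eₖ(p) ≤ (∑ p)ᵏ/k!` for the elementary symmetric polynomial give the Poisson-type tail
`μ(A ∩ {N ≥ k}) ≤ μ(A) sᵏ/k!`, where `s = ∑ μ(Aₖ) ≤ 1/2`. Hence the integral is at most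
`3 μ(A) ∑_{k ≥ 1} sᵏ ≤ 6 μ(A) s`, while independence also gives
`μ(E) = μ(A) (1 - ∏ (1 - μ(Aₖ))) ≥ μ(A) (1 - e⁻ˢ) ≥ μ(A) s / 2`.
-/

open MeasureTheory ProbabilityTheory Set

/-- `α(x) = x^{x-1}` for `x > 1` and `α(x) = x` for `x ≤ 1`. -/
noncomputable def alphaFn (x : ℝ) : ℝ := if 1 < x then x ^ (x - 1) else x

/-- `Ψ(x) = ∫_0^{|x|} α(t) dt`. -/
noncomputable def PsiFn (x : ℝ) : ℝ := ∫ t in (0:ℝ)..|x|, alphaFn t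

universe u

open Finset Real
open scoped Nat

lemma alphaFn_nonneg {x : ℝ} (hx : 0 ≤ x) : 0 ≤ alphaFn x := by
  unfold alphaFn
  split_ifs
  · positivity
  · exact hx

lemma alphaFn_le_max_one_pow {x : ℝ} {m : ℕ} (hx : 0 ≤ x) (hxm : x ≤ m + 1) :
    alphaFn x ≤ max 1 x ^ m := by
  unfold alphaFn
  split_ifs with h1x
  · calc x ^ (x - 1) ≤ x ^ (m : ℝ) := rpow_le_rpow_of_exponent_le h1x.le (by linarith)
      _ = x ^ m := rpow_natCast x m
      _ ≤ max 1 x ^ m := pow_le_pow_left₀ hx (le_max_right 1 x) m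
  · exact (not_lt.1 h1x).trans (one_le_pow₀ (le_max_left 1 x))

lemma PsiFn_le_max_one_pow {x : ℝ} {m : ℕ} (hxm : |x| ≤ m + 1) :
    PsiFn x ≤ max 1 |x| ^ (m + 1) := by
  have hbound : ∀ t ∈ uIoc (0 : ℝ) |x|, ‖alphaFn t‖ ≤ max 1 |x| ^ m := by
    intro t ht
    rw [uIoc_of_le (abs_nonneg x)] at ht
    rw [Real.norm_of_nonneg (alphaFn_nonneg ht.1.le)]
    exact (alphaFn_le_max_one_pow ht.1.le (ht.2.trans hxm)).trans
      (pow_le_pow_left₀ (by positivity) (max_le_max_left 1 ht.2) m)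
  calc PsiFn x ≤ ‖PsiFn x‖ := le_norm_self _
    _ ≤ max 1 |x| ^ m * |(|x| - 0)| := intervalIntegral.norm_integral_le_of_norm_le_const hbound
    _ ≤ max 1 |x| ^ m * max 1 |x| := by
        rw [sub_zero, abs_abs]
        exact mul_le_mul_of_nonneg_left (le_max_right _ _) (by positivity)
    _ = max 1 |x| ^ (m + 1) := (pow_succ _ _).symm

lemma succ_div_three_pow_le (k : ℕ) : (((k : ℝ) + 1) / 3) ^ k ≤ 3 * k ! := by
  have he : exp ((k : ℝ) + 1) ≤ 3 ^ (k + 1) := by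
    rw [← Nat.cast_succ, ← exp_one_pow]
    exact pow_le_pow_left₀ (exp_pos 1).le (exp_one_lt_d9.le.trans (by norm_num)) _
  have h := (div_le_iff₀ (by positivity)).1
    ((pow_div_factorial_le_exp ((k : ℝ) + 1) (by positivity) (k + 1)).trans he)
  rw [Nat.factorial_succ, Nat.cast_mul, Nat.cast_succ, pow_succ] at h
  rw [div_pow, div_le_iff₀ (by positivity)]
  exact le_of_mul_le_mul_right (h.trans_eq (by ring)) (by positivity : (0 : ℝ) < k + 1)

lemma PsiFn_succ_div_three_le {k : ℕ} (hk : 1 ≤ k) : PsiFn (((k : ℝ) + 1) / 3) ≤ 3 * k ! := by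
  obtain ⟨m, rfl⟩ := Nat.exists_eq_add_of_le' hk
  have habs : |(((m + 1 : ℕ) : ℝ) + 1) / 3| = (((m + 1 : ℕ) : ℝ) + 1) / 3 :=
    abs_of_nonneg (by positivity)
  refine (PsiFn_le_max_one_pow (m := m) (by rw [habs]; push_cast; linarith)).trans ?_
  rw [habs, max_def]
  split_ifs
  · exact succ_div_three_pow_le (m + 1)
  · linarith [one_pow (M := ℝ) (m + 1), Nat.one_le_cast (α := ℝ).2 (Nat.factorial_pos (m + 1))]

section OrderedField

variable {K : Type*} [Field K] [LinearOrder K] [IsStrictOrderedRing K]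

lemma pow_succ_add_mul_pow_le_add_pow {x y : K} (hx : 0 ≤ x) (hy : 0 ≤ y) (k : ℕ) :
    x ^ (k + 1) + (k + 1) * y * x ^ k ≤ (x + y) ^ (k + 1) := by
  induction k with
  | zero => simp
  | succ k ih =>
    have hxk : 0 ≤ x ^ k := pow_nonneg hx k
    calc x ^ (k + 2) + ((k + 1 : ℕ) + 1) * y * x ^ (k + 1)
        ≤ (x + y) * (x ^ (k + 1) + (k + 1) * y * x ^ k) := by
          push_cast
          ring_nf
          nlinarith [mul_nonneg (mul_nonneg hy hy) hxk,
            mul_nonneg (mul_nonneg (mul_nonneg hy hy) hxk) (Nat.cast_nonneg (α := K) k)]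
      _ ≤ (x + y) * (x + y) ^ (k + 1) := by gcongr
      _ = (x + y) ^ (k + 2) := by ring

lemma sum_powersetCard_prod_le {ι : Type*} [DecidableEq ι] {p : ι → K} (hp : ∀ i, 0 ≤ p i)
    (s : Finset ι) (k : ℕ) :
    ∑ T ∈ s.powersetCard k, ∏ i ∈ T, p i ≤ (∑ i ∈ s, p i) ^ k / k ! := by
  induction s using Finset.induction generalizing k with
  | empty =>
    cases k with
    | zero => simp
    | succ k => rw [powersetCard_eq_empty.2 (by simp), sum_empty]; positivity
  | @insert a s ha ih =>
    cases k with
    | zero => simp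
    | succ k =>
      have hs : 0 ≤ ∑ i ∈ s, p i := sum_nonneg fun i _ => hp i
      have hinsert : ∑ T ∈ (s.powersetCard k).image (insert a), ∏ i ∈ T, p i
          = p a * ∑ T ∈ s.powersetCard k, ∏ i ∈ T, p i := by
        rw [sum_image, mul_sum]
        · refine sum_congr rfl fun T hT => prod_insert fun haT => ha ?_
          exact (mem_powersetCard.1 hT).1 haT
        · exact insert_erase_invOn.2.injOn.mono fun T hT ↦
            notMem_mono (mem_powersetCard.1 hT).1 ha
      rw [powersetCard_succ_insert ha, sum_union, hinsert, sum_insert ha]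
      · calc ∑ T ∈ s.powersetCard (k + 1), ∏ i ∈ T, p i
              + p a * ∑ T ∈ s.powersetCard k, ∏ i ∈ T, p i
            ≤ (∑ i ∈ s, p i) ^ (k + 1) / (k + 1)! + p a * ((∑ i ∈ s, p i) ^ k / k !) := by
              gcongr
              exacts [ih (k + 1), hp a, ih k]
          _ = ((∑ i ∈ s, p i) ^ (k + 1) + (k + 1) * p a * (∑ i ∈ s, p i) ^ k) / (k + 1)! := by
              rw [Nat.factorial_succ]; push_cast; field_simp
          _ ≤ (p a + ∑ i ∈ s, p i) ^ (k + 1) / (k + 1)! := by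
              rw [add_comm (p a)]
              gcongr
              exact pow_succ_add_mul_pow_le_add_pow hs (hp a) k
      · refine Finset.disjoint_left.2 fun T hT hT' => ?_
        obtain ⟨U, -, rfl⟩ := mem_image.1 hT'
        exact ha ((mem_powersetCard.1 hT).1 (mem_insert_self a U))

lemma sum_Ico_one_pow_le_two_mul {x : K} (hx0 : 0 ≤ x) (hx : x ≤ 1 / 2) (m : ℕ) :
    ∑ k ∈ Finset.Ico 1 m, x ^ k ≤ 2 * x := by
  calc ∑ k ∈ Finset.Ico 1 m, x ^ k ≤ x ^ 1 / (1 - x) := geom_sum_Ico_le_of_lt_one hx0 (by linarith)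
    _ ≤ 2 * x := by
        rw [pow_one, div_le_iff₀ (by linarith)]
        nlinarith

end OrderedField

lemma exp_neg_le_one_sub_half {x : ℝ} (hx0 : 0 ≤ x) (hx1 : x ≤ 1) : exp (-x) ≤ 1 - x / 2 := by
  have h : exp (-x) * (1 + x) ≤ 1 := by
    calc exp (-x) * (1 + x) ≤ exp (-x) * exp x := by gcongr; linarith [add_one_le_exp x]
      _ = 1 := by rw [← exp_add, neg_add_cancel, exp_zero]
  nlinarith [exp_pos (-x)]

lemma sum_div_two_le_one_sub_prod_one_sub {ι : Type*} {s : Finset ι} {p : ι → ℝ}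
    (hp : ∀ i ∈ s, 0 ≤ p i) (hsum : ∑ i ∈ s, p i ≤ 1) :
    (∑ i ∈ s, p i) / 2 ≤ 1 - ∏ i ∈ s, (1 - p i) := by
  have hprod : ∏ i ∈ s, (1 - p i) ≤ exp (-∑ i ∈ s, p i) := by
    rw [← sum_neg_distrib, exp_sum]
    refine prod_le_prod (fun i hi => ?_) fun i _ => one_sub_le_exp_neg (p i)
    linarith [single_le_sum hp hi]
  linarith [exp_neg_le_one_sub_half (sum_nonneg hp) hsum]

lemma setIntegral_comp_eq_sum {Ω β : Type*} [MeasurableSpace Ω] [MeasurableSpace β]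
    [MeasurableSingletonClass β] {μ : Measure Ω} [IsFiniteMeasure μ] {N : Ω → β}
    (hN : Measurable N) {E : Set Ω} (hE : MeasurableSet E) {S : Finset β}
    (hS : ∀ x ∈ E, N x ∈ S) (g : β → ℝ) :
    ∫ x in E, g (N x) ∂μ = ∑ k ∈ S, g k * μ.real (E ∩ N ⁻¹' {k}) := by
  have hmeas : ∀ k ∈ S, MeasurableSet (E ∩ N ⁻¹' {k}) :=
    fun k _ => hE.inter (hN (measurableSet_singleton k))
  have hconst : ∀ k, EqOn (fun x => g (N x)) (fun _ => g k) (E ∩ N ⁻¹' {k}) :=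
    fun k x hx => congrArg g (hx.2 : N x = k)
  have hcover : E = ⋃ k ∈ S, E ∩ N ⁻¹' {k} := by
    ext x
    simpa using fun hx => hS x hx
  calc ∫ x in E, g (N x) ∂μ = ∫ x in ⋃ k ∈ S, E ∩ N ⁻¹' {k}, g (N x) ∂μ := by rw [← hcover]
    _ = ∑ k ∈ S, ∫ x in E ∩ N ⁻¹' {k}, g (N x) ∂μ := by
        refine integral_biUnion_finset S hmeas (fun k _ l _ hkl => ?_) fun k hk =>
          (integrableOn_const (measure_ne_top μ _)).congr_fun (hconst k).symm (hmeas k hk)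
        exact ((Set.disjoint_singleton.2 hkl).preimage N).mono inter_subset_right
          inter_subset_right
    _ = ∑ k ∈ S, g k * μ.real (E ∩ N ⁻¹' {k}) := by
        refine sum_congr rfl fun k hk => ?_
        rw [setIntegral_congr_fun (hmeas k hk) (hconst k), setIntegral_const, smul_eq_mul,
          mul_comm]

open Classical in
noncomputable def memCount {ι Ω : Type*} [Fintype ι] (B : ι → Set Ω) (x : Ω) : ℕ :=
  #{i | x ∈ B i}

lemma cast_memCount_eq_sum_indicator {ι Ω : Type*} [Fintype ι] (B : ι → Set Ω) (x : Ω) :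
    (memCount B x : ℝ) = ∑ i, (B i).indicator (fun _ => (1 : ℝ)) x := by
  classical
  simp only [memCount, Set.indicator_apply, card_filter, Nat.cast_sum, Nat.cast_ite,
    Nat.cast_one, Nat.cast_zero]

lemma memCount_mem_Ico {ι Ω : Type*} [Fintype ι] {B : ι → Set Ω} {x : Ω} (hx : x ∈ ⋃ i, B i) :
    memCount B x ∈ Finset.Ico 1 (Fintype.card ι + 1) := by
  classical
  obtain ⟨i, hi⟩ := mem_iUnion.1 hx
  exact Finset.mem_Ico.2 ⟨card_pos.2 ⟨i, Finset.mem_filter.2 ⟨mem_univ i, hi⟩⟩,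
    Nat.lt_succ_of_le (card_le_univ _)⟩

lemma measurable_memCount {ι Ω : Type*} [Fintype ι] [MeasurableSpace Ω] {B : ι → Set Ω}
    (hB : ∀ i, MeasurableSet (B i)) : Measurable (memCount B) := by
  unfold memCount
  simp_rw [card_filter]
  exact Finset.measurable_sum _ fun i _ => Measurable.ite (hB i) measurable_const measurable_const

section Independence

variable {Ω : Type*} [MeasurableSpace Ω] {μ : Measure Ω} {n : ℕ} {A : Set Ω} {B : Fin n → Set Ω}

lemma measureReal_inter_iInter_of_iIndepSet (h : iIndepSet (Fin.cases A B) μ) {C : Fin n → Set Ω}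
    (hC : ∀ i, MeasurableSet[MeasurableSpace.generateFrom {B i}] (C i)) :
    μ.real (A ∩ ⋂ i, C i) = μ.real A * ∏ i, μ.real (C i) := by
  have hmeas : ∀ j, MeasurableSet[MeasurableSpace.generateFrom {Fin.cases A B j}]
      ((Fin.cases A C : Fin (n + 1) → Set Ω) j) := by
    exact Fin.cases (MeasurableSpace.measurableSet_generateFrom rfl) hC
  have h := ((iIndepSet_iff_iIndep _ _).1 h).meas_iInter hmeas
  have hinter : ⋂ j, (Fin.cases A C : Fin (n + 1) → Set Ω) j = A ∩ ⋂ i, C i := by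
    ext x
    simp [Fin.forall_fin_succ]
  rw [hinter, Fin.prod_univ_succ] at h
  simp [measureReal_def, h, ENNReal.toReal_prod]

lemma measureReal_inter_setOf_le_memCount (h : iIndepSet (Fin.cases A B) μ) (k : ℕ) :
    μ.real (A ∩ {x | k ≤ memCount B x}) ≤ μ.real A * (∑ i, μ.real (B i)) ^ k / k ! := by
  classical
  have := h.isProbabilityMeasure
  -- `⋂ i, C T i = ⋂ i ∈ T, B i`, written over all indices so that independence applies.
  set C : Finset (Fin n) → Fin n → Set Ω := fun T i => if i ∈ T then B i else univ
  have hC : ∀ T i, MeasurableSet[MeasurableSpace.generateFrom {B i}] (C T i) := by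
    intro T i
    by_cases hi : i ∈ T
    · simpa [C, hi] using MeasurableSpace.measurableSet_generateFrom (mem_singleton (B i))
    · simp [C, hi]
  have hsub : A ∩ {x | k ≤ memCount B x} ⊆ ⋃ T ∈ univ.powersetCard k, A ∩ ⋂ i, C T i := by
    rintro x ⟨hxA, hx⟩
    obtain ⟨T, hT, hTk⟩ := exists_subset_card_eq hx
    refine mem_biUnion (mem_powersetCard.2 ⟨subset_univ T, hTk⟩) ⟨hxA, mem_iInter.2 fun i => ?_⟩
    by_cases hi : i ∈ T
    · simpa [C, hi] using (mem_filter.1 (hT hi)).2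
    · simp [C, hi]
  calc μ.real (A ∩ {x | k ≤ memCount B x})
      ≤ ∑ T ∈ univ.powersetCard k, μ.real (A ∩ ⋂ i, C T i) :=
        (measureReal_mono hsub (measure_ne_top μ _)).trans (measureReal_biUnion_finset_le _ _)
    _ = μ.real A * ∑ T ∈ univ.powersetCard k, ∏ i ∈ T, μ.real (B i) := by
        rw [mul_sum]
        refine sum_congr rfl fun T _ => ?_
        rw [measureReal_inter_iInter_of_iIndepSet h (hC T)]
        simp [C, apply_ite, prod_ite_mem]
    _ ≤ μ.real A * ((∑ i, μ.real (B i)) ^ k / k !) := by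
        gcongr
        exact sum_powersetCard_prod_le (fun i => measureReal_nonneg) univ k
    _ = μ.real A * (∑ i, μ.real (B i)) ^ k / k ! := (mul_div_assoc _ _ _).symm

lemma mul_sum_measureReal_le_two_mul_measureReal_inter_iUnion [IsProbabilityMeasure μ]
    (h : iIndepSet (Fin.cases A B) μ) (hB : ∀ i, MeasurableSet (B i))
    (hsum : ∑ i, μ.real (B i) ≤ 1) :
    μ.real A * ∑ i, μ.real (B i) ≤ 2 * μ.real (A ∩ ⋃ i, B i) := by
  have hdiff : μ.real (A \ ⋃ i, B i) = μ.real A * ∏ i, (1 - μ.real (B i)) := by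
    rw [sdiff_eq, compl_iUnion, measureReal_inter_iInter_of_iIndepSet h fun i =>
      (MeasurableSpace.measurableSet_generateFrom (mem_singleton (B i))).compl]
    simp_rw [probReal_compl_eq_one_sub (hB _)]
  have hsplit := measureReal_inter_add_sdiff (μ := μ) (s := A) (MeasurableSet.iUnion hB)
  have hprod :=
    sum_div_two_le_one_sub_prod_one_sub (s := univ) (fun i _ => measureReal_nonneg) hsum
  nlinarith [mul_le_mul_of_nonneg_left hprod (measureReal_nonneg (μ := μ) (s := A))]

end Independence

/-- **Exponential estimate for independent sets (Lemma 2).** There is an absolute constant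
`C > 0` such that: if `A, A_1, …, A_n` are independent sets in a probability space with
`∑ μ(A_k) ≤ 1/2` and `E = A ∩ ⋃ A_k`, then
`∫_E Ψ((1/3)(1 + ∑ 𝟙_{A_k})) dμ ≤ C·μ(E)`. -/
theorem psi_integral_le_of_iIndepSet :
    ∃ C : ℝ, 0 < C ∧
      ∀ (Ω : Type u) (_ : MeasurableSpace Ω) (μ : Measure Ω), IsProbabilityMeasure μ →
        ∀ (n : ℕ) (A : Set Ω) (B : Fin n → Set Ω),
          MeasurableSet A → (∀ i, MeasurableSet (B i)) →
          iIndepSet (Fin.cases A B) μ →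
          (∑ i, μ (B i)) ≤ 1 / 2 →
          ∫ x in A ∩ ⋃ i, B i,
              PsiFn ((1 / 3) * (1 + ∑ i, (B i).indicator (fun _ => (1:ℝ)) x)) ∂μ ≤
            C * (μ (A ∩ ⋃ i, B i)).toReal := by
  refine ⟨12, by norm_num, fun Ω _ μ _ n A B hA hB hInd hsum => ?_⟩
  set s := ∑ i, μ.real (B i)
  have hs : s ≤ 1 / 2 := by
    simpa [s, measureReal_def, ENNReal.toReal_sum] using ENNReal.toReal_mono (by norm_num) hsum
  have hcount : ∀ x ∈ A ∩ ⋃ i, B i, memCount B x ∈ Finset.Ico 1 (n + 1) :=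
    fun x hx => by simpa only [Fintype.card_fin] using memCount_mem_Ico hx.2
  simp_rw [← cast_memCount_eq_sum_indicator,
    show ∀ m : ℝ, 1 / 3 * (1 + m) = (m + 1) / 3 by intro m; ring]
  rw [setIntegral_comp_eq_sum (measurable_memCount hB) (hA.inter (.iUnion hB)) hcount
    (fun k : ℕ => PsiFn ((k + 1) / 3))]
  calc ∑ k ∈ Ico 1 (n + 1), PsiFn ((k + 1) / 3) * μ.real ((A ∩ ⋃ i, B i) ∩ memCount B ⁻¹' {k})
      ≤ ∑ k ∈ Ico 1 (n + 1), 3 * k ! * (μ.real A * s ^ k / k !) := by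
        refine sum_le_sum fun k hk => mul_le_mul (PsiFn_succ_div_three_le (mem_Ico.1 hk).1)
          ((measureReal_mono ?_).trans (measureReal_inter_setOf_le_memCount hInd k))
          measureReal_nonneg (by positivity)
        exact fun x ⟨⟨hxA, _⟩, hx⟩ => ⟨hxA, (hx : memCount B x = k).ge⟩
    _ = 3 * μ.real A * ∑ k ∈ Ico 1 (n + 1), s ^ k := by
        rw [mul_sum]
        exact sum_congr rfl fun k _ => by field_simp
    _ ≤ 3 * μ.real A * (2 * s) := by
        gcongr
        exact sum_Ico_one_pow_le_two_mul (sum_nonneg fun i _ => measureReal_nonneg) hs _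
    _ ≤ 12 * μ.real (A ∩ ⋃ i, B i) := by
        linarith [mul_sum_measureReal_le_two_mul_measureReal_inter_iUnion hInd hB (by linarith)]
end

section
/- Let (X, m) be a probability space and (T_n) a sequence of linear operators from L¹(X,m) to measurable functions on X satisfying: (1) f ≥ 0 implies T_n f ≥ 0; (2) T_n 𝟙_X = 1; and (3) for every ε > 0 there exists δ > 0 such that if E ⊆ X is measurable with m(E) < δ then m({x : T_n 𝟙_E(x) > ε}) < ε for all n. If (T_n) is δ-sweeping out for every 0 < δ < 1, then (T_n) is strong sweeping out. -/
/-!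
Starting from `∅`, build measurable sets `S j` converging in the measure algebra. With
`η = 1 / (j + 1)`, `S (j + 1)` arises from `S j` by adding a small set `A` and removing a small set
`B`, both `(1 - η / 4)`-sweeping out. After adding `A`, almost every point sees
`T n 𝟙 > 1 - η / 2` for some `n` in a finite window `[j, M)`; after removing `B` it sees
`T n 𝟙 < η / 2`, since `T n 𝟙[Bᶜ] = 1 - T n 𝟙[B]`. Condition (3) and a union bound over the
finite window make these properties stable under all later, geometrically smaller, changes, so
they hold for the limit set `E` at every level `j`, which forces `limsup = 1` and `liminf = 0`.
-/

open MeasureTheory Filter Set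
open scoped symmDiff ENNReal

local notation "𝟙[" S "]" => Set.indicator S fun _ => (1 : ℝ)

section

variable {X : Type*} [MeasurableSpace X]

section Operator

variable {m : Measure X} {L : (X → ℝ) → X → ℝ}

theorem integrable_indicator_one [IsFiniteMeasure m] {S : Set X} (hS : MeasurableSet S) :
    Integrable 𝟙[S] m :=
  (integrable_const 1).indicator hS

theorem apply_le_apply_of_le
    (hadd : ∀ f g, Integrable f m → Integrable g m →
      L (fun x => f x + g x) = fun x => L f x + L g x)
    (hpos : ∀ f, Integrable f m → (∀ x, 0 ≤ f x) → ∀ x, 0 ≤ L f x)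
    {f g : X → ℝ} (hf : Integrable f m) (hg : Integrable g m) (hfg : ∀ x, f x ≤ g x) (x : X) :
    L f x ≤ L g x := by
  have hsplit : L g x = L f x + L (g - f) x := by
    rw [← congrFun (hadd f _ hf (hg.sub hf)) x]
    simp only [Pi.sub_apply, add_sub_cancel]
  linarith [hpos _ (hg.sub hf) (fun y => sub_nonneg.2 (hfg y)) x]

theorem apply_indicator_mono [IsFiniteMeasure m]
    (hadd : ∀ f g, Integrable f m → Integrable g m →
      L (fun x => f x + g x) = fun x => L f x + L g x)
    (hpos : ∀ f, Integrable f m → (∀ x, 0 ≤ f x) → ∀ x, 0 ≤ L f x)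
    {S S' : Set X} (hS : MeasurableSet S) (hS' : MeasurableSet S') (h : S ⊆ S') (x : X) :
    L 𝟙[S] x ≤ L 𝟙[S'] x :=
  apply_le_apply_of_le hadd hpos (integrable_indicator_one hS) (integrable_indicator_one hS')
    (indicator_le_indicator_of_subset h fun _ => zero_le_one) x

theorem apply_indicator_le_add_symmDiff [IsFiniteMeasure m]
    (hadd : ∀ f g, Integrable f m → Integrable g m →
      L (fun x => f x + g x) = fun x => L f x + L g x)
    (hpos : ∀ f, Integrable f m → (∀ x, 0 ≤ f x) → ∀ x, 0 ≤ L f x)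
    {S S' : Set X} (hS : MeasurableSet S) (hS' : MeasurableSet S') (x : X) :
    L 𝟙[S] x ≤ L 𝟙[S'] x + L 𝟙[S ∆ S'] x := by
  have hS'_int := integrable_indicator_one (m := m) hS'
  have hΔ_int := integrable_indicator_one (m := m) (hS.symmDiff hS')
  rw [← congrFun (hadd _ _ hS'_int hΔ_int) x]
  refine apply_le_apply_of_le hadd hpos (integrable_indicator_one hS) (hS'_int.add hΔ_int)
    (fun y => ?_) x
  by_cases hy : y ∈ S <;> by_cases hy' : y ∈ S' <;> simp [hy, hy', mem_symmDiff]

theorem apply_indicator_compl [IsFiniteMeasure m]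
    (hadd : ∀ f g, Integrable f m → Integrable g m →
      L (fun x => f x + g x) = fun x => L f x + L g x)
    (hone : L (fun _ => 1) = fun _ => 1) {S : Set X} (hS : MeasurableSet S) (x : X) :
    L 𝟙[Sᶜ] x = 1 - L 𝟙[S] x := by
  have hsplit := congrFun (hadd _ _ (integrable_indicator_one (m := m) hS)
    (integrable_indicator_one hS.compl)) x
  simp only [indicator_self_add_compl_apply, hone] at hsplit
  linarith

theorem apply_indicator_le_one [IsFiniteMeasure m]
    (hadd : ∀ f g, Integrable f m → Integrable g m →
      L (fun x => f x + g x) = fun x => L f x + L g x)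
    (hpos : ∀ f, Integrable f m → (∀ x, 0 ≤ f x) → ∀ x, 0 ≤ L f x)
    (hone : L (fun _ => 1) = fun _ => 1) {S : Set X} (hS : MeasurableSet S) (x : X) :
    L 𝟙[S] x ≤ 1 := by
  have := hpos _ (integrable_indicator_one hS.compl) (indicator_nonneg fun _ _ => zero_le_one) x
  rw [apply_indicator_compl hadd hone hS] at this
  linarith

end Operator

section Approximation

variable {μ : Measure X}

/-- `P` holds on a ball around `S` for the pseudometric `μ (S ∆ S')` on measurable sets. -/
def HoldsNear (μ : Measure X) (P : Set X → Prop) (S : Set X) : Prop :=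
  ∃ d : ℝ, 0 < d ∧ ∀ S', MeasurableSet S' → μ (S ∆ S') < ENNReal.ofReal d → P S'

namespace HoldsNear

variable {P Q : Set X → Prop} {S : Set X}

theorem and (hP : HoldsNear μ P S) (hQ : HoldsNear μ Q S) :
    HoldsNear μ (fun S' => P S' ∧ Q S') S := by
  obtain ⟨d, hd, hP⟩ := hP
  obtain ⟨e, he, hQ⟩ := hQ
  refine ⟨min d e, lt_min hd he, fun S' hS' h => ⟨hP S' hS' ?_, hQ S' hS' ?_⟩⟩
  · exact h.trans_le (ENNReal.ofReal_le_ofReal (min_le_left d e))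
  · exact h.trans_le (ENNReal.ofReal_le_ofReal (min_le_right d e))

theorem of_compl (h : HoldsNear μ P Sᶜ) : HoldsNear μ (fun S' => P S'ᶜ) S := by
  obtain ⟨d, hd, hP⟩ := h
  exact ⟨d, hd, fun S' hS' h => hP S'ᶜ hS'.compl (by rwa [compl_symmDiff_compl])⟩

theorem holdsNear (h : HoldsNear μ P S) : HoldsNear μ (HoldsNear μ P) S := by
  obtain ⟨d, hd, hP⟩ := h
  refine ⟨d / 2, half_pos hd, fun S' _ hS' =>
    ⟨d / 2, half_pos hd, fun S'' hS'' hS'S'' => hP S'' hS'' ?_⟩⟩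
  calc μ (S ∆ S'') ≤ μ (S ∆ S') + μ (S' ∆ S'') := measure_symmDiff_le _ _ _
    _ < ENNReal.ofReal (d / 2) + ENNReal.ofReal (d / 2) := ENNReal.add_lt_add hS' hS'S''
    _ = ENNReal.ofReal d := by
      rw [← ENNReal.ofReal_add (half_pos hd).le (half_pos hd).le, add_halves]

end HoldsNear

theorem liminf_symmDiff_subset {α : Type*} (s : ℕ → Set α) (N : ℕ) :
    liminf s atTop ∆ s N ⊆ ⋃ i, s (N + i) ∆ s (N + i + 1) := by
  intro x hx
  by_contra hx'
  simp only [mem_iUnion, mem_symmDiff, not_exists, not_or, not_and, not_not] at hx'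
  have hconst : ∀ i, x ∈ s (N + i) ↔ x ∈ s N := by
    intro i
    induction i with
    | zero => rfl
    | succ i ih => exact ⟨fun h => ih.1 ((hx' i).2 h), fun h => (hx' i).1 (ih.2 h)⟩
  have hev : ∀ᶠ i in atTop, x ∈ s i ↔ x ∈ s N := by
    filter_upwards [eventually_ge_atTop N] with i hi
    obtain ⟨k, rfl⟩ := Nat.exists_eq_add_of_le hi
    exact hconst k
  have hlim : x ∈ liminf s atTop ↔ x ∈ s N := by
    rw [mem_liminf_iff_eventually_mem, eventually_congr hev, eventually_const]
  rw [mem_symmDiff, hlim] at hx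
  tauto

theorem measure_liminf_symmDiff_le {s : ℕ → Set X} {r : ℕ → ℝ}
    (hs : ∀ i, μ (s i ∆ s (i + 1)) ≤ ENNReal.ofReal (r i)) (hr : ∀ i, r (i + 1) ≤ r i / 2)
    (hr₀ : ∀ i, 0 ≤ r i) (N : ℕ) :
    μ (liminf s atTop ∆ s N) ≤ ENNReal.ofReal (2 * r N) := by
  have hgeom : ∀ i, r (N + i) ≤ r N * (1 / 2) ^ i := by
    intro i
    induction i with
    | zero => simp
    | succ i ih =>
      calc r (N + (i + 1)) ≤ r (N + i) / 2 := hr (N + i)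
        _ ≤ r N * (1 / 2) ^ i / 2 := by linarith
        _ = r N * (1 / 2) ^ (i + 1) := by ring
  calc μ (liminf s atTop ∆ s N) ≤ ∑' i, μ (s (N + i) ∆ s (N + i + 1)) :=
        (measure_mono (liminf_symmDiff_subset s N)).trans (measure_iUnion_le _)
    _ ≤ ∑' i, ENNReal.ofReal (r N * (1 / 2) ^ i) :=
        ENNReal.tsum_le_tsum fun i => (hs _).trans (ENNReal.ofReal_le_ofReal (hgeom i))
    _ = ENNReal.ofReal (2 * r N) := by
        rw [← ENNReal.ofReal_tsum_of_nonneg (fun i => by have := hr₀ N; positivity)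
          (summable_geometric_two.mul_left _), tsum_mul_left, tsum_geometric_two, mul_comm]

theorem exists_measure_lt_forall_of_dense (Q : ℕ → Set X → Prop)
    (hQ : ∀ j S r, MeasurableSet S → 0 < r →
      ∃ S', MeasurableSet S' ∧ μ (S ∆ S') < ENNReal.ofReal r ∧ HoldsNear μ (Q j) S')
    {ε : ℝ} (hε : 0 < ε) :
    ∃ E, MeasurableSet E ∧ μ E < ENNReal.ofReal ε ∧ ∀ j, Q j E := by
  -- the new radius is at most `d / 4`: the limit set, which lies within twice the new radius of
  -- the new set, stays in the ball on which `Q j` holds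
  have hstep : ∀ j (p : Set X × ℝ), MeasurableSet p.1 → 0 < p.2 → ∃ p' : Set X × ℝ,
      (MeasurableSet p'.1 ∧ 0 < p'.2) ∧ p'.2 ≤ p.2 / 2 ∧
      μ (p.1 ∆ p'.1) < ENNReal.ofReal p.2 ∧
      ∀ S, MeasurableSet S → μ (p'.1 ∆ S) ≤ ENNReal.ofReal (2 * p'.2) → Q j S := by
    intro j p hp hr
    obtain ⟨S', hS', hpS', d, hd, hQS'⟩ := hQ j p.1 p.2 hp hr
    refine ⟨(S', min (p.2 / 2) (d / 4)), ⟨hS', by positivity⟩, min_le_left _ _, hpS',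
      fun S hS h => hQS' S hS (h.trans_lt ?_)⟩
    exact (ENNReal.ofReal_lt_ofReal_iff hd).2 (by linarith [min_le_right (p.2 / 2) (d / 4)])
  choose! next hnext using hstep
  let s : ℕ → Set X × ℝ := fun j => Nat.rec (∅, ε / 4) next j
  have hs : ∀ j, MeasurableSet (s j).1 ∧ 0 < (s j).2 := by
    intro j
    induction j with
    | zero => exact ⟨.empty, show 0 < ε / 4 by positivity⟩
    | succ j ih => exact (hnext j (s j) ih.1 ih.2).1
  have hnext' := fun j => hnext j (s j) (hs j).1 (hs j).2
  have hE := measure_liminf_symmDiff_le (μ := μ) (s := fun j => (s j).1)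
    (fun j => (hnext' j).2.2.1.le) (fun j => (hnext' j).2.1) (fun j => (hs j).2.le)
  have hEmeas := MeasurableSet.measurableSet_liminf fun j => (hs j).1
  refine ⟨_, hEmeas, ?_, fun j =>
    (hnext' j).2.2.2 _ hEmeas (by rw [symmDiff_comm]; exact hE (j + 1))⟩
  calc μ (liminf (fun j => (s j).1) atTop)
      = μ (liminf (fun j => (s j).1) atTop ∆ (s 0).1) := by
        rw [show (s 0).1 = ⊥ from rfl, symmDiff_bot]
    _ ≤ ENNReal.ofReal (2 * (ε / 4)) := hE 0
    _ < ENNReal.ofReal ε := (ENNReal.ofReal_lt_ofReal_iff hε).2 (by linarith)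

end Approximation

theorem exists_measure_window_lt {μ : Measure X} [IsFiniteMeasure μ] {u : ℕ → X → ℝ} {c : ℝ}
    (hu : ∀ n, Measurable (u n)) (h : ∀ᵐ x ∂μ, ∃ᶠ n in atTop, c < u n x) (j : ℕ)
    {ε : ℝ≥0∞} (hε : 0 < ε) :
    ∃ M, μ {x | ∀ n, j ≤ n → n < M → u n x ≤ c} < ε := by
  set W : ℕ → Set X := fun M => {x | ∀ n, j ≤ n → n < M → u n x ≤ c}
  have hW : ∀ M, MeasurableSet (W M) := fun M => by
    simp only [W, ofPred_forall]
    exact .iInter fun n => .iInter fun _ => .iInter fun _ =>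
      measurableSet_le (hu n) measurable_const
  have hanti : Antitone W := fun a b hab x hx n hjn hnb => hx n hjn (hnb.trans_le hab)
  have hnull : μ (⋂ M, W M) = 0 := by
    refine measure_mono_null (fun x hx => ?_) (ae_iff.1 h)
    intro hfreq
    obtain ⟨n, hjn, hn⟩ := frequently_atTop.1 hfreq j
    exact (mem_iInter.1 hx (n + 1) n hjn n.lt_succ_self).not_gt hn
  have hlim := tendsto_measure_iInter_atTop (fun M => (hW M).nullMeasurableSet) hanti
    ⟨0, measure_ne_top μ _⟩
  rw [hnull] at hlim
  exact (hlim.eventually (gt_mem_nhds hε)).exists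

section Sweeping

variable {m : Measure X} [IsFiniteMeasure m] {T : ℕ → (X → ℝ) → X → ℝ}

theorem holdsNear_measure_tail_le
    (hadd : ∀ n f g, Integrable f m → Integrable g m →
      T n (fun x => f x + g x) = fun x => T n f x + T n g x)
    (hmeas : ∀ n f, Integrable f m → Measurable (T n f))
    (hpos : ∀ n f, Integrable f m → (∀ x, 0 ≤ f x) → ∀ x, 0 ≤ T n f x)
    (habs : ∀ ε : ℝ, 0 < ε → ∃ δ : ℝ, 0 < δ ∧
      ∀ E : Set X, MeasurableSet E → m E < ENNReal.ofReal δ →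
        ∀ n, m {x | ε < T n 𝟙[E] x} < ENNReal.ofReal ε)
    {S : Set X} (hS : MeasurableSet S) {c c' η : ℝ}
    (hfreq : ∀ᵐ x ∂m, ∃ᶠ n in atTop, c < T n 𝟙[S] x) (hc : c' < c) (hη : 0 < η) (j : ℕ) :
    HoldsNear m (fun S' => m {x | ∀ n, j ≤ n → T n 𝟙[S'] x ≤ c'} ≤ ENNReal.ofReal η) S := by
  obtain ⟨M, hM⟩ := exists_measure_window_lt (fun n => hmeas n _ (integrable_indicator_one hS))
    hfreq j (ENNReal.ofReal_pos.2 (half_pos hη))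
  set γ := min (c - c') (η / (2 * (M + 1)))
  have hγ : 0 < γ := lt_min (sub_pos.2 hc) (by positivity)
  have hMγ : M * γ ≤ η / 2 := by
    have := (le_div_iff₀ (by positivity)).1 (min_le_right (c - c') (η / (2 * (M + 1))))
    nlinarith
  obtain ⟨d, hd, hsmall⟩ := habs γ hγ
  refine ⟨d, hd, fun S' hS' hSS' => ?_⟩
  -- off the exceptional sets, `T n 𝟙[S] ≤ T n 𝟙[S'] + γ ≤ c' + γ ≤ c` along the window
  have hcover : {x | ∀ n, j ≤ n → T n 𝟙[S'] x ≤ c'} ⊆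
      {x | ∀ n, j ≤ n → n < M → T n 𝟙[S] x ≤ c} ∪
        ⋃ n ∈ Finset.range M, {x | γ < T n 𝟙[S ∆ S'] x} := by
    intro x hx
    by_contra hx'
    simp only [mem_union, mem_ofPred_eq, mem_iUnion, Finset.mem_range, not_or, not_exists,
      not_lt] at hx'
    obtain ⟨n, hjn, hnM, hn⟩ := by simpa only [not_forall, not_le] using hx'.1
    linarith [apply_indicator_le_add_symmDiff (hadd n) (hpos n) hS hS' x, hx n hjn,
      hx'.2 n hnM, min_le_left (c - c') (η / (2 * (M + 1)))]
  calc m {x | ∀ n, j ≤ n → T n 𝟙[S'] x ≤ c'}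
      ≤ ENNReal.ofReal (η / 2) + ∑ _n ∈ Finset.range M, ENNReal.ofReal γ :=
        (measure_mono hcover).trans <| (measure_union_le _ _).trans <| add_le_add hM.le <|
          (measure_biUnion_finset_le _ _).trans <| Finset.sum_le_sum fun n _ =>
            (hsmall _ (hS.symmDiff hS') hSS' n).le
    _ = ENNReal.ofReal (η / 2 + M * γ) := by
        rw [Finset.sum_const, Finset.card_range, nsmul_eq_mul, ← ENNReal.ofReal_natCast,
          ← ENNReal.ofReal_mul M.cast_nonneg, ← ENNReal.ofReal_add (half_pos hη).le
          (by positivity)]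
    _ ≤ ENNReal.ofReal η := ENNReal.ofReal_le_ofReal (by linarith)

theorem ae_frequently_lt_of_le_limsup
    (hadd : ∀ n f g, Integrable f m → Integrable g m →
      T n (fun x => f x + g x) = fun x => T n f x + T n g x)
    (hpos : ∀ n f, Integrable f m → (∀ x, 0 ≤ f x) → ∀ x, 0 ≤ T n f x)
    {A S : Set X} (hA : MeasurableSet A) (hS : MeasurableSet S) (hAS : A ⊆ S) {c δ : ℝ}
    (hc : c < δ) (h : ∀ᵐ x ∂m, δ ≤ limsup (fun n => T n 𝟙[A] x) atTop) :
    ∀ᵐ x ∂m, ∃ᶠ n in atTop, c < T n 𝟙[S] x := by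
  filter_upwards [h] with x hx
  have hcobdd : IsCoboundedUnder (· ≤ ·) atTop fun n => T n 𝟙[A] x :=
    (isBoundedUnder_of ⟨0, fun n => hpos n _ (integrable_indicator_one hA)
      (indicator_nonneg fun _ _ => zero_le_one) x⟩).isCoboundedUnder_le
  exact (frequently_lt_of_lt_limsup hcobdd (hc.trans_le hx)).mono fun n hn =>
    hn.trans_le (apply_indicator_mono (hadd n) (hpos n) hA hS hAS x)

theorem exists_near_holdsNear_measure_tail_le
    (hadd : ∀ n f g, Integrable f m → Integrable g m →
      T n (fun x => f x + g x) = fun x => T n f x + T n g x)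
    (hmeas : ∀ n f, Integrable f m → Measurable (T n f))
    (hpos : ∀ n f, Integrable f m → (∀ x, 0 ≤ f x) → ∀ x, 0 ≤ T n f x)
    (habs : ∀ ε : ℝ, 0 < ε → ∃ δ : ℝ, 0 < δ ∧
      ∀ E : Set X, MeasurableSet E → m E < ENNReal.ofReal δ →
        ∀ n, m {x | ε < T n 𝟙[E] x} < ENNReal.ofReal ε)
    (hsweep : ∀ δ : ℝ, 0 < δ → δ < 1 → ∀ ε : ℝ, 0 < ε →
      ∃ E : Set X, MeasurableSet E ∧ m E < ENNReal.ofReal ε ∧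
        ∀ᵐ x ∂m, δ ≤ limsup (fun n => T n 𝟙[E] x) atTop)
    {S : Set X} (hS : MeasurableSet S) {r η : ℝ} (hr : 0 < r) (hη₀ : 0 < η) (hη₁ : η ≤ 1)
    (j : ℕ) :
    ∃ S', MeasurableSet S' ∧ m (S ∆ S') < ENNReal.ofReal r ∧
      HoldsNear m (fun S'' => m {x | ∀ n, j ≤ n → T n 𝟙[S''] x ≤ 1 - η} ≤ ENNReal.ofReal η ∧
        m {x | ∀ n, j ≤ n → T n 𝟙[S''ᶜ] x ≤ 1 - η} ≤ ENNReal.ofReal η) S' := by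
  set P : Set X → Prop := fun S'' => m {x | ∀ n, j ≤ n → T n 𝟙[S''] x ≤ 1 - η} ≤ ENNReal.ofReal η
  have hδ₀ : 0 < 1 - η / 4 := by linarith
  have hδ₁ : 1 - η / 4 < 1 := by linarith
  have hnear : ∀ A S₁, MeasurableSet A → MeasurableSet S₁ → A ⊆ S₁ →
      (∀ᵐ x ∂m, 1 - η / 4 ≤ limsup (fun n => T n 𝟙[A] x) atTop) → HoldsNear m P S₁ :=
    fun A S₁ hA hS₁ hAS₁ hswept => holdsNear_measure_tail_le hadd hmeas hpos habs hS₁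
      (ae_frequently_lt_of_le_limsup hadd hpos hA hS₁ hAS₁ (by linarith) hswept)
      (by linarith : 1 - η < 1 - η / 2) hη₀ j
  -- add a swept set `A` to push the `limsup` up, then remove a swept set `B` to push the
  -- `liminf` down, with `B` so small that the first property survives
  obtain ⟨A, hA, hmA, hsweptA⟩ := hsweep _ hδ₀ hδ₁ (r / 2) (half_pos hr)
  have hS₁ : MeasurableSet (S ∪ A) := hS.union hA
  obtain ⟨ρ, hρ, hnearS₁⟩ := (hnear A _ hA hS₁ subset_union_right hsweptA).holdsNear
  obtain ⟨B, hB, hmB, hsweptB⟩ := hsweep _ hδ₀ hδ₁ (min (r / 2) ρ) (lt_min (half_pos hr) hρ)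
  have hS₂ : MeasurableSet ((S ∪ A) \ B) := hS₁.diff hB
  refine ⟨(S ∪ A) \ B, hS₂, ?_, (hnearS₁ _ hS₂ ?_).and
    (hnear B _ hB hS₂.compl (fun x hxB hx => hx.2 hxB) hsweptB).of_compl⟩
  · calc m (S ∆ ((S ∪ A) \ B)) ≤ m (A ∪ B) := measure_mono fun x => by
          simp only [mem_symmDiff, mem_union, Set.mem_sdiff]; tauto
      _ ≤ m A + m B := measure_union_le _ _
      _ < ENNReal.ofReal (r / 2) + ENNReal.ofReal (r / 2) :=
          ENNReal.add_lt_add hmA (hmB.trans_le (ENNReal.ofReal_le_ofReal (min_le_left _ _)))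
      _ = ENNReal.ofReal r := by
          rw [← ENNReal.ofReal_add (half_pos hr).le (half_pos hr).le, add_halves]
  · refine (measure_mono fun x => ?_).trans_lt
      (hmB.trans_le (ENNReal.ofReal_le_ofReal (min_le_right _ _)))
    simp only [mem_symmDiff, mem_union, Set.mem_sdiff]
    tauto

end Sweeping

theorem ae_forall_frequently_of_measure_tail_le {μ : Measure X} {u : ℕ → X → ℝ} {c : ℝ}
    (h : ∀ j : ℕ, μ {x | ∀ n, j ≤ n → u n x ≤ c - 1 / ((j : ℝ) + 1)} ≤
      ENNReal.ofReal (1 / ((j : ℝ) + 1))) :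
    ∀ᵐ x ∂μ, ∀ ε > 0, ∃ᶠ n in atTop, c - ε < u n x := by
  have hk : ∀ k : ℕ, ∀ᵐ x ∂μ, ∃ᶠ n in atTop, c - 1 / ((k : ℝ) + 1) < u n x := by
    intro k
    refine ae_iff.2 (measure_mono_null (fun x hx => ?_) (measure_iUnion_null fun N =>
      (?_ : μ {x | ∀ n, N ≤ n → u n x ≤ c - 1 / ((k : ℝ) + 1)} = 0)))
    · simpa only [mem_iUnion, mem_ofPred_eq, not_frequently, eventually_atTop, not_lt] using hx
    · -- the tail set is contained in the `j`-th one for every `j ≥ max N k`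
      have hlim := ENNReal.tendsto_ofReal (tendsto_one_div_add_atTop_nhds_zero_nat (𝕜 := ℝ))
      rw [ENNReal.ofReal_zero] at hlim
      refine nonpos_iff_eq_zero.1 (ge_of_tendsto hlim ?_)
      filter_upwards [eventually_ge_atTop N, eventually_ge_atTop k] with j hNj hkj
      refine (measure_mono fun x hx n hjn => ?_).trans (h j)
      have : 1 / ((j : ℝ) + 1) ≤ 1 / ((k : ℝ) + 1) := by gcongr
      linarith [hx n (hNj.trans hjn)]
  filter_upwards [ae_all_iff.2 hk] with x hx ε hε
  obtain ⟨k, hk⟩ := exists_nat_one_div_lt hε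
  exact (hx k).mono fun n hn => by linarith

theorem limsup_eq_of_forall_frequently {v : ℕ → ℝ} {b c : ℝ} (hb : ∀ n, b ≤ v n)
    (hc : ∀ n, v n ≤ c) (h : ∀ ε > 0, ∃ᶠ n in atTop, c - ε < v n) :
    limsup v atTop = c := by
  have hbdd : IsBoundedUnder (· ≤ ·) atTop v := isBoundedUnder_of ⟨c, hc⟩
  refine le_antisymm (limsup_le_of_le (isBoundedUnder_of ⟨b, hb⟩).isCoboundedUnder_le
    (.of_forall hc)) (le_of_forall_pos_le_add fun ε hε => ?_)
  linarith [le_limsup_of_frequently_le ((h ε hε).mono fun n hn => hn.le) hbdd]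

theorem liminf_eq_of_forall_frequently {v : ℕ → ℝ} {b c : ℝ} (hb : ∀ n, b ≤ v n)
    (hc : ∀ n, v n ≤ c) (h : ∀ ε > 0, ∃ᶠ n in atTop, v n < b + ε) :
    liminf v atTop = b := by
  have hbdd : IsBoundedUnder (· ≥ ·) atTop v := isBoundedUnder_of ⟨b, hb⟩
  refine le_antisymm (le_of_forall_pos_le_add fun ε hε => ?_)
    (le_liminf_of_le (isBoundedUnder_of ⟨c, hc⟩).isCoboundedUnder_ge (.of_forall hb))
  linarith [liminf_le_of_frequently_le ((h ε hε).mono fun n hn => hn.le) hbdd]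

end

theorem strong_sweeping_out_of_delta_sweeping_out_general
    {X : Type*} [MeasurableSpace X] (m : Measure X) [IsProbabilityMeasure m]
    (T : ℕ → (X → ℝ) → (X → ℝ))
    -- `T n` is linear (on integrable functions) and maps into measurable functions
    (hadd : ∀ n f g, Integrable f m → Integrable g m →
      T n (fun x => f x + g x) = fun x => T n f x + T n g x)
    (hmeas : ∀ n f, Integrable f m → Measurable (T n f))
    -- (1) positivity
    (hpos : ∀ n f, Integrable f m → (∀ x, 0 ≤ f x) → ∀ x, 0 ≤ T n f x)
    -- (2) `T n 𝟙_X = 1`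
    (hone : ∀ n, T n (fun _ => 1) = fun _ => 1)
    -- (3) continuity at small sets
    (habs : ∀ ε : ℝ, 0 < ε → ∃ δ : ℝ, 0 < δ ∧
      ∀ E : Set X, MeasurableSet E → m E < ENNReal.ofReal δ →
        ∀ n, m {x | ε < T n (E.indicator fun _ => (1:ℝ)) x} < ENNReal.ofReal ε)
    -- `(T n)` is δ-sweeping out for every `0 < δ < 1`
    (hsweep : ∀ δ : ℝ, 0 < δ → δ < 1 → ∀ ε : ℝ, 0 < ε →
      ∃ E : Set X, MeasurableSet E ∧ m E < ENNReal.ofReal ε ∧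
        ∀ᵐ x ∂m, δ ≤ limsup (fun n => T n (E.indicator fun _ => (1:ℝ)) x) atTop) :
    -- conclusion: strong sweeping out
    ∀ ε : ℝ, 0 < ε →
      ∃ E : Set X, MeasurableSet E ∧ m E < ENNReal.ofReal ε ∧
        (∀ᵐ x ∂m, limsup (fun n => T n (E.indicator fun _ => (1:ℝ)) x) atTop = 1) ∧
        (∀ᵐ x ∂m, liminf (fun n => T n (E.indicator fun _ => (1:ℝ)) x) atTop = 0) := by
  intro ε hε
  obtain ⟨E, hE, hmE, htail⟩ := exists_measure_lt_forall_of_dense _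
    (fun j S r hS hr => exists_near_holdsNear_measure_tail_le hadd hmeas hpos habs hsweep hS hr
      Nat.one_div_pos_of_nat (div_le_one_of_le₀ (by simp) (by positivity)) j) hε
  have hge : ∀ n x, 0 ≤ T n 𝟙[E] x := fun n =>
    hpos n _ (integrable_indicator_one hE) (indicator_nonneg fun _ _ => zero_le_one)
  have hle : ∀ n x, T n 𝟙[E] x ≤ 1 := fun n =>
    apply_indicator_le_one (hadd n) (hpos n) (hone n) hE
  refine ⟨E, hE, hmE, ?_, ?_⟩
  · filter_upwards [ae_forall_frequently_of_measure_tail_le fun j => (htail j).1] with x hx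
    exact limsup_eq_of_forall_frequently (hge · x) (hle · x) hx
  · filter_upwards [ae_forall_frequently_of_measure_tail_le fun j => (htail j).2] with x hx
    refine liminf_eq_of_forall_frequently (hge · x) (hle · x) fun δ hδ =>
      (hx δ hδ).mono fun n hn => ?_
    rw [apply_indicator_compl (hadd n) (hone n) hE] at hn
    linarith

/-- **δ-sweeping out for all δ < 1 implies strong sweeping out (Theorem 6).**
Let `(T n)` be linear operators from `L¹(X,m)` to measurable functions satisfying
positivity, `T n 1 = 1`, and the continuity condition (3). If `(T n)` is `δ`-sweeping
out for every `0 < δ < 1`, then it is strong sweeping out. -/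
theorem strong_sweeping_out_of_delta_sweeping_out
    {X : Type*} [MeasurableSpace X] (m : Measure X) [IsProbabilityMeasure m]
    (T : ℕ → (X → ℝ) → (X → ℝ))
    -- `T n` is linear (on integrable functions) and maps into measurable functions
    (hadd : ∀ n f g, Integrable f m → Integrable g m →
      T n (fun x => f x + g x) = fun x => T n f x + T n g x)
    (hsmul : ∀ (n : ℕ) (c : ℝ) (f), Integrable f m →
      T n (fun x => c * f x) = fun x => c * T n f x)
    (hmeas : ∀ n f, Integrable f m → Measurable (T n f))
    -- (1) positivity
    (hpos : ∀ n f, Integrable f m → (∀ x, 0 ≤ f x) → ∀ x, 0 ≤ T n f x)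
    -- (2) `T n 𝟙_X = 1`
    (hone : ∀ n, T n (fun _ => 1) = fun _ => 1)
    -- (3) continuity at small sets
    (habs : ∀ ε : ℝ, 0 < ε → ∃ δ : ℝ, 0 < δ ∧
      ∀ E : Set X, MeasurableSet E → m E < ENNReal.ofReal δ →
        ∀ n, m {x | ε < T n (E.indicator fun _ => (1:ℝ)) x} < ENNReal.ofReal ε)
    -- `(T n)` is δ-sweeping out for every `0 < δ < 1`
    (hsweep : ∀ δ : ℝ, 0 < δ → δ < 1 → ∀ ε : ℝ, 0 < ε →
      ∃ E : Set X, MeasurableSet E ∧ m E < ENNReal.ofReal ε ∧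
        ∀ᵐ x ∂m, δ ≤ limsup (fun n => T n (E.indicator fun _ => (1:ℝ)) x) atTop) :
    -- conclusion: strong sweeping out
    ∀ ε : ℝ, 0 < ε →
      ∃ E : Set X, MeasurableSet E ∧ m E < ENNReal.ofReal ε ∧
        (∀ᵐ x ∂m, limsup (fun n => T n (E.indicator fun _ => (1:ℝ)) x) atTop = 1) ∧
        (∀ᵐ x ∂m, liminf (fun n => T n (E.indicator fun _ => (1:ℝ)) x) atTop = 0) :=
  strong_sweeping_out_of_delta_sweeping_out_general m T hadd hmeas hpos hone habs hsweep
end
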